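/- For the Arnoldi aggregation of size j, the approximated transient distributions satisfy Σ_{s=1}^n p̃_k(s) = 1 for all 0 ≤ k ≤ j−1, since p̃_k equals the true probability distribution p_k in these steps; in particular p̃_0 = p_0 even though π_0 = (‖p_0‖₂,0,...,0)^T is generally not a probability vector. -/

import Mathlib

/-! The Arnoldi relation `q_t P = ∑_{i ≤ t} h_{t,i} q_i + h_{t,t+1} q_{t+1}` says that row `t` of
`H_j Q_j` is `q_t P` for every `t < j - 1`. As `H_j` is upper Hessenberg and `π₀` is supported on
the first coordinate, `π₀ᵀ H_j^k` is supported on the first `k + 1` coordinates, so for `k < j`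
only those rows are used and induction gives `π₀ᵀ H_j^k Q_j = (π₀ᵀ Q_j) P^k = p₀ᵀ P^k`, where
`π₀ᵀ Q_j = ‖p₀‖₂ q_1 = p₀`. A row-stochastic matrix preserves total mass, so the sums are `1`. -/

open Matrix Finset

/-- Euclidean norm of a row vector. -/
noncomputable def norm2 {n : ℕ} (v : Fin n → ℝ) : ℝ := Real.sqrt (v ⬝ᵥ v)

/-- One Gram–Schmidt projection-subtraction step. -/
noncomputable def gsStep {n : ℕ} (r q : Fin n → ℝ) : Fin n → ℝ := r - (r ⬝ᵥ q) • q

/-- List `[q_0, …, q_j]` of Arnoldi vectors after `j` expansion steps applied to `(v, M)`. -/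
noncomputable def arnoldiList {n : ℕ} (v : Fin n → ℝ) (M : Matrix (Fin n) (Fin n) ℝ) :
    ℕ → List (Fin n → ℝ)
  | 0 => [(norm2 v)⁻¹ • v]
  | j + 1 =>
    let qs := arnoldiList v M j
    let r := qs.foldl gsStep (Matrix.vecMul (qs.getLastD 0) M)
    qs ++ [(norm2 r)⁻¹ • r]

/-- The Arnoldi vector `q_{i+1}` of the paper (0-indexed: `aQ v M i`). -/
noncomputable def aQ {n : ℕ} (v : Fin n → ℝ) (M : Matrix (Fin n) (Fin n) ℝ) (i : ℕ) :
    Fin n → ℝ :=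
  (arnoldiList v M i).getLastD 0

/-- Partial residual `r^{(i)}` in outer step `j` (0-indexed): `q_j M` minus the projections
onto `q_0, …, q_{i-1}`. -/
noncomputable def pres {n : ℕ} (v : Fin n → ℝ) (M : Matrix (Fin n) (Fin n) ℝ) (j i : ℕ) :
    Fin n → ℝ :=
  ((arnoldiList v M j).take i).foldl gsStep (Matrix.vecMul (aQ v M j) M)

/-- The Gram–Schmidt coefficient `h_{j,i}` (0-indexed in both arguments). -/
noncomputable def aH {n : ℕ} (v : Fin n → ℝ) (M : Matrix (Fin n) (Fin n) ℝ) (j i : ℕ) : ℝ :=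
  pres v M j i ⬝ᵥ aQ v M i

/-- The subdiagonal coefficient `h_{j, j+1} = ‖r_{j+1}‖₂` (0-indexed in `j`). -/
noncomputable def hsub {n : ℕ} (v : Fin n → ℝ) (M : Matrix (Fin n) (Fin n) ℝ) (j : ℕ) : ℝ :=
  norm2 (pres v M j (j + 1))

/-- The upper-Hessenberg matrix `H_j` produced by `j` Arnoldi steps. -/
noncomputable def arnoldiHmat {n : ℕ} (v : Fin n → ℝ) (M : Matrix (Fin n) (Fin n) ℝ) (j : ℕ) :
    Matrix (Fin j) (Fin j) ℝ := fun i l =>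
  if (l : ℕ) ≤ (i : ℕ) then aH v M i l
  else if (l : ℕ) = (i : ℕ) + 1 then hsub v M i else 0

/-- The matrix `Q_j` whose rows are the Arnoldi vectors `q_1, …, q_j` of the paper. -/
noncomputable def arnoldiQmat {n : ℕ} (v : Fin n → ℝ) (M : Matrix (Fin n) (Fin n) ℝ) (j : ℕ) :
    Matrix (Fin j) (Fin n) ℝ := fun i => aQ v M i

/-- The Krylov subspace `K^j(v, M) = span{v, vM, …, vM^{j-1}}` (of row vectors). -/
noncomputable def krylov {n : ℕ} (v : Fin n → ℝ) (M : Matrix (Fin n) (Fin n) ℝ) (j : ℕ) :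
    Submodule ℝ (Fin n → ℝ) :=
  Submodule.span ℝ (Set.range fun i : Fin j => Matrix.vecMul v (M ^ (i : ℕ)))

def Matrix.IsUpperHessenberg {R : Type*} [Zero R] {j : ℕ} (H : Matrix (Fin j) (Fin j) R) :
    Prop :=
  ∀ i l : Fin j, (i : ℕ) + 1 < l → H i l = 0

section Hessenberg

variable {R : Type*} [Semiring R] {m n : Type*} [Fintype m] [Fintype n]

theorem Matrix.vecMul_vecMul_eq_of_rows {H : Matrix m m R} {Q : Matrix m n R}
    {P : Matrix n n R} {w : m → R} (h : ∀ t, w t ≠ 0 → H t ᵥ* Q = Q t ᵥ* P) :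
    w ᵥ* H ᵥ* Q = w ᵥ* Q ᵥ* P := by
  rw [vecMul_vecMul, vecMul_vecMul, vecMul_eq_sum, vecMul_eq_sum]
  refine Finset.sum_congr rfl fun t _ => ?_
  by_cases ht : w t = 0
  · simp only [ht, zero_smul]
  · rw [mul_apply_eq_vecMul, mul_apply_eq_vecMul, h t ht]

variable {j : ℕ} {H : Matrix (Fin j) (Fin j) R}

theorem Matrix.IsUpperHessenberg.vecMul_pow_apply_eq_zero (hH : H.IsUpperHessenberg)
    {w : Fin j → R} (hw : ∀ t : Fin j, (t : ℕ) ≠ 0 → w t = 0) {k : ℕ} {t : Fin j}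
    (ht : k < t) : (w ᵥ* H ^ k) t = 0 := by
  induction k generalizing t with
  | zero => rw [pow_zero, vecMul_one, hw t (by omega)]
  | succ k ih =>
    rw [pow_succ, ← vecMul_vecMul, vecMul, dotProduct]
    refine Finset.sum_eq_zero fun u _ => ?_
    rcases lt_or_ge k u with hu | hu
    · rw [ih hu, zero_mul]
    · rw [hH u t (by omega), mul_zero]

theorem Matrix.IsUpperHessenberg.vecMul_pow_vecMul [DecidableEq n] (hH : H.IsUpperHessenberg)
    {Q : Matrix (Fin j) n R} {P : Matrix n n R}
    (hrow : ∀ t : Fin j, (t : ℕ) + 1 < j → H t ᵥ* Q = Q t ᵥ* P)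
    {w : Fin j → R} (hw : ∀ t : Fin j, (t : ℕ) ≠ 0 → w t = 0) {k : ℕ} (hk : k < j) :
    w ᵥ* H ^ k ᵥ* Q = w ᵥ* Q ᵥ* P ^ k := by
  induction k with
  | zero => rw [pow_zero, pow_zero, vecMul_one, vecMul_one]
  | succ k ih =>
    have hsupp : ∀ t, (w ᵥ* H ^ k) t ≠ 0 → H t ᵥ* Q = Q t ᵥ* P := fun t ht =>
      hrow t (by have := mt (hH.vecMul_pow_apply_eq_zero hw (t := t)) ht; omega)
    rw [pow_succ, ← vecMul_vecMul, vecMul_vecMul_eq_of_rows hsupp, ih (by omega),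
      vecMul_vecMul, ← pow_succ]

end Hessenberg

theorem norm2_eq_zero_iff {n : ℕ} {v : Fin n → ℝ} : norm2 v = 0 ↔ v = 0 :=
  (Real.sqrt_eq_zero (Finset.sum_nonneg fun i _ => mul_self_nonneg (v i))).trans
    dotProduct_self_eq_zero

theorem foldl_gsStep_map_range {n : ℕ} (r : Fin n → ℝ) (q : ℕ → Fin n → ℝ) (m : ℕ) :
    ((List.range m).map q).foldl gsStep r =
      r - ∑ i ∈ range m, (((List.range i).map q).foldl gsStep r ⬝ᵥ q i) • q i := by
  induction m with
  | zero => simp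
  | succ m ih =>
    rw [List.range_succ, List.map_append, List.foldl_append, Finset.sum_range_succ]
    simp only [List.map_cons, List.map_nil, List.foldl_cons, List.foldl_nil, gsStep]
    nth_rewrite 1 [ih]
    abel

section Arnoldi

variable {n : ℕ} (v : Fin n → ℝ) (M : Matrix (Fin n) (Fin n) ℝ)

theorem aQ_succ_eq_foldl (t : ℕ) :
    aQ v M (t + 1) =
      (norm2 ((arnoldiList v M t).foldl gsStep (aQ v M t ᵥ* M)))⁻¹ •
        (arnoldiList v M t).foldl gsStep (aQ v M t ᵥ* M) := by
  rw [aQ, arnoldiList, List.getLastD_concat]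
  rfl

theorem arnoldiList_eq_map_range (t : ℕ) :
    arnoldiList v M t = (List.range (t + 1)).map (aQ v M) := by
  induction t with
  | zero => rfl
  | succ t ih =>
    rw [List.range_succ, List.map_append, ← ih, List.map_singleton, aQ_succ_eq_foldl]
    rfl

theorem pres_eq_foldl {t m : ℕ} (h : m ≤ t + 1) :
    pres v M t m = ((List.range m).map (aQ v M)).foldl gsStep (aQ v M t ᵥ* M) := by
  rw [pres, arnoldiList_eq_map_range, ← List.map_take, List.take_range, min_eq_left h]

theorem pres_eq_sub_sum {t m : ℕ} (h : m ≤ t + 1) :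
    pres v M t m = aQ v M t ᵥ* M - ∑ i ∈ range m, aH v M t i • aQ v M i := by
  rw [pres_eq_foldl v M h, foldl_gsStep_map_range]
  refine congrArg _ (Finset.sum_congr rfl fun i hi => ?_)
  rw [aH, pres_eq_foldl v M (by rw [Finset.mem_range] at hi; omega)]

theorem aQ_succ (t : ℕ) : aQ v M (t + 1) = (hsub v M t)⁻¹ • pres v M t (t + 1) := by
  rw [aQ_succ_eq_foldl, hsub, pres_eq_foldl v M le_rfl, ← arnoldiList_eq_map_range]

theorem vecMul_aQ_eq_sum {t : ℕ} (ht : hsub v M t ≠ 0) :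
    aQ v M t ᵥ* M = ∑ i ∈ range (t + 1), aH v M t i • aQ v M i + hsub v M t • aQ v M (t + 1) := by
  rw [aQ_succ, smul_inv_smul₀ ht, pres_eq_sub_sum v M le_rfl, add_sub_cancel]

theorem arnoldiHmat_isUpperHessenberg (j : ℕ) : (arnoldiHmat v M j).IsUpperHessenberg :=
  fun i l h => by rw [arnoldiHmat, if_neg (by omega), if_neg (by omega)]

theorem arnoldiHmat_row_vecMul {j : ℕ} (t : Fin j) (ht : (t : ℕ) + 1 < j)
    (hs : hsub v M t ≠ 0) :
    arnoldiHmat v M j t ᵥ* arnoldiQmat v M j = arnoldiQmat v M j t ᵥ* M := by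
  set c : ℕ → ℝ := fun i =>
    if i ≤ (t : ℕ) then aH v M t i else if i = (t : ℕ) + 1 then hsub v M t else 0
  calc arnoldiHmat v M j t ᵥ* arnoldiQmat v M j
      = ∑ i ∈ range j, c i • aQ v M i :=
        (vecMul_eq_sum _ _).trans (Fin.sum_univ_eq_sum_range (fun i => c i • aQ v M i) j)
    _ = ∑ i ∈ range (t + 2), c i • aQ v M i := by
        refine (Finset.sum_subset (range_subset_range.2 ht) fun i _ hi => ?_).symm
        rw [Finset.mem_range] at hi
        simp only [c, if_neg (by omega : ¬ i ≤ t), if_neg (by omega : i ≠ t + 1), zero_smul]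
    _ = ∑ i ∈ range (t + 1), aH v M t i • aQ v M i + hsub v M t • aQ v M (t + 1) := by
        rw [Finset.sum_range_succ]
        simp only [c, if_neg (by omega : ¬ (t : ℕ) + 1 ≤ t), if_pos]
        refine congrArg (· + _) (Finset.sum_congr rfl fun i hi => ?_)
        rw [if_pos (Nat.lt_succ_iff.1 (Finset.mem_range.1 hi))]
    _ = arnoldiQmat v M j t ᵥ* M := (vecMul_aQ_eq_sum v M hs).symm

theorem single_vecMul_arnoldiQmat {j : ℕ} (hj : 0 < j) (hv : norm2 v ≠ 0) :
    Pi.single ⟨0, hj⟩ (norm2 v) ᵥ* arnoldiQmat v M j = v := by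
  rw [single_vecMul]
  exact smul_inv_smul₀ hv v

end Arnoldi

theorem arnoldi_aggregation_sums_to_one_general {n j : ℕ} (hj : 0 < j)
    (P : Matrix (Fin n) (Fin n) ℝ)
    (hPnn : ∀ i l, 0 ≤ P i l) (hProw : ∀ i, ∑ l, P i l = 1)
    (p₀ : Fin n → ℝ) (hp₀sum : ∑ s, p₀ s = 1)
    (hrun : ∀ i, i + 1 < j → hsub p₀ P i ≠ 0) :
    (∀ k : ℕ, k ≤ j - 1 →
      ∑ s,
        Matrix.vecMul
          (Matrix.vecMul (fun t : Fin j => if (t : ℕ) = 0 then norm2 p₀ else 0)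
            ((arnoldiHmat p₀ P j) ^ k))
          (arnoldiQmat p₀ P j) s = 1) ∧
    Matrix.vecMul (fun t : Fin j => if (t : ℕ) = 0 then norm2 p₀ else 0)
      (arnoldiQmat p₀ P j) = p₀ := by
  set π₀ : Fin j → ℝ := fun t => if (t : ℕ) = 0 then norm2 p₀ else 0
  have hp₀ : norm2 p₀ ≠ 0 := by
    intro h
    simp [norm2_eq_zero_iff.1 h] at hp₀sum
  have hπ₀ : π₀ = Pi.single ⟨0, hj⟩ (norm2 p₀) := by
    ext t
    simp [π₀, Pi.single_apply, Fin.ext_iff]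
  have hbase : π₀ ᵥ* arnoldiQmat p₀ P j = p₀ := by
    rw [hπ₀, single_vecMul_arnoldiQmat p₀ P hj hp₀]
  have hP : P ∈ rowStochastic ℝ (Fin n) := mem_rowStochastic_iff_sum.2 ⟨hPnn, hProw⟩
  refine ⟨fun k hk => ?_, hbase⟩
  rw [(arnoldiHmat_isUpperHessenberg p₀ P j).vecMul_pow_vecMul
    (fun t ht => arnoldiHmat_row_vecMul p₀ P t ht (hrun t ht)) (fun t ht => if_neg ht)
    (by omega), hbase, ← dotProduct_one]
  exact vecMul_dotProduct_one_eq_one_rowStochastic (pow_mem hP k) (by rwa [dotProduct_one])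

/-- for the Arnoldi aggregation of size `j`, the approximated transient
distributions sum to `1` for `0 ≤ k ≤ j-1`; in particular `p̃_0 = p_0`. -/
theorem arnoldi_aggregation_sums_to_one {n j : ℕ} (hj : 0 < j)
    (P : Matrix (Fin n) (Fin n) ℝ)
    (hPnn : ∀ i l, 0 ≤ P i l) (hProw : ∀ i, ∑ l, P i l = 1)
    (p₀ : Fin n → ℝ) (hp₀nn : ∀ s, 0 ≤ p₀ s) (hp₀sum : ∑ s, p₀ s = 1)
    (hrun : ∀ i, i + 1 < j → hsub p₀ P i ≠ 0) :
    (∀ k : ℕ, k ≤ j - 1 →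
      ∑ s,
        Matrix.vecMul
          (Matrix.vecMul (fun t : Fin j => if (t : ℕ) = 0 then norm2 p₀ else 0)
            ((arnoldiHmat p₀ P j) ^ k))
          (arnoldiQmat p₀ P j) s = 1) ∧
    Matrix.vecMul (fun t : Fin j => if (t : ℕ) = 0 then norm2 p₀ else 0)
      (arnoldiQmat p₀ P j) = p₀ :=
  arnoldi_aggregation_sums_to_one_general hj P hPnn hProw p₀ hp₀sum hrun
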